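/- arXiv:math/0308227 — 3 statements merged into one kernel-verified Lean document; each statement's English description precedes it below -/
import Mathlib

section
/- Define the partial derivative of Hⁱʲ = (1/A)gⁱʲ + (c/(A(A²-2ct)))g⁰ⁱg⁰ʲ with respect to pₖ (with gⁱʲ constant). Then ∂Hⁱʲ/∂pₖ = (c/(A(A²-2ct)))(gᵏⁱg⁰ʲ + gᵏʲg⁰ⁱ) + (2c²/(A(A²-2ct)²))g⁰ᵏg⁰ⁱg⁰ʲ, and in particular the combination Qⁱʲₕ = (1/2)Gₕₖ(∂ₚᵢHʲᵏ + ∂ₚⱼHⁱᵏ - ∂ₚₖHⁱʲ) evaluated with Gₕₖ = A gₕₖ - (c/A)pₕpₖ equals (c/A)·pₕ·Hⁱʲ... i.e., Qⁱʲₕ = (c/A)Hⁱʲpₕ. -/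
/-!
Write `u = p ᵥ* g⁻¹` (so `g⁰ⁱ = uᵢ`, `∂ₖ t = uₖ`, `∂ₖ uᵢ = gᵏⁱ`) and `s = A² - 2ct`.
Then `H = g⁻¹ / A + φ(t) u uᵀ` with `φ(t) = c / (A s)` and `φ'(t) = 2c² / (A s²)`, so the
derivative formula is the product and chain rules. In `∂ᵢHʲᵏ + ∂ⱼHⁱᵏ - ∂ₖHⁱʲ` the terms
`φ gⁱᵏ uʲ` and `φ gʲᵏ uⁱ` cancel, leaving `(2φ gⁱʲ + φ' uⁱuʲ) uᵏ`; since `g u = p` and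
`p ⬝ᵥ u = 2t`, contracting with `G` gives `Gₕₖ uᵏ = (s / A) pₕ`, and the value of `Qⁱʲₕ`
is then algebra.
-/

open Matrix

theorem sum_sum_mul_mul_eq_vecMul_dotProduct {R ι : Type*} [CommSemiring R] [Fintype ι]
    (M : Matrix ι ι R) (q : ι → R) :
    ∑ i, ∑ k, M i k * q i * q k = (q ᵥ* M) ⬝ᵥ q := by
  simp only [vecMul, dotProduct, Finset.sum_mul]
  rw [Finset.sum_comm]
  exact Finset.sum_congr rfl fun _ _ => Finset.sum_congr rfl fun _ _ => by ring

theorem mulVec_vecMul_nonsing_inv {R ι : Type*} [CommRing R] [Fintype ι] [DecidableEq ι]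
    {g : Matrix ι ι R} (hg : IsUnit g.det) (hsymm : g⁻¹.IsSymm) (p : ι → R) :
    g *ᵥ (p ᵥ* g⁻¹) = p := by
  rw [← mulVec_transpose, hsymm.eq, mulVec_mulVec, mul_nonsing_inv _ hg, one_mulVec]

section
variable {𝕜 ι : Type*} [NontriviallyNormedField 𝕜] [Fintype ι]

theorem hasFDerivAt_vecMul_apply (M : Matrix ι ι 𝕜) (m : ι) (p : ι → 𝕜) :
    HasFDerivAt (fun q : ι → 𝕜 => (q ᵥ* M) m)
      (∑ h, M h m • ContinuousLinearMap.proj (R := 𝕜) (φ := fun _ : ι => 𝕜) h) p :=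
  HasFDerivAt.fun_sum fun h _ => (hasFDerivAt_apply h p).mul_const (M h m)

theorem fderiv_vecMul_apply (M : Matrix ι ι 𝕜) (m : ι) (p v : ι → 𝕜) :
    fderiv 𝕜 (fun q : ι → 𝕜 => (q ᵥ* M) m) p v = (v ᵥ* M) m := by
  rw [(hasFDerivAt_vecMul_apply M m p).fderiv]
  simp [vecMul, dotProduct, mul_comm]

theorem hasFDerivAt_vecMul_dotProduct_self (M : Matrix ι ι 𝕜) (p : ι → 𝕜) :
    HasFDerivAt (fun q : ι → 𝕜 => (q ᵥ* M) ⬝ᵥ q)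
      (∑ k, ((p ᵥ* M) k • ContinuousLinearMap.proj (R := 𝕜) (φ := fun _ : ι => 𝕜) k +
        p k • ∑ h, M h k • ContinuousLinearMap.proj (R := 𝕜) (φ := fun _ : ι => 𝕜) h)) p :=
  HasFDerivAt.fun_sum fun k _ => (hasFDerivAt_vecMul_apply M k p).mul (hasFDerivAt_apply k p)

theorem fderiv_vecMul_dotProduct_self (M : Matrix ι ι 𝕜) (p v : ι → 𝕜) :
    fderiv 𝕜 (fun q : ι → 𝕜 => (q ᵥ* M) ⬝ᵥ q) p v = (p ᵥ* M) ⬝ᵥ v + (v ᵥ* M) ⬝ᵥ p := by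
  rw [(hasFDerivAt_vecMul_dotProduct_self M p).fderiv]
  simp [vecMul, dotProduct, Finset.sum_add_distrib, mul_comm]

theorem fderiv_const_add_comp_mul_mul {E : Type*} [NormedAddCommGroup E] [NormedSpace 𝕜 E]
    {F : 𝕜 → 𝕜} {F' : 𝕜} {τ u w : E → 𝕜} {x : E} (a : 𝕜) (hF : HasDerivAt F F' (τ x))
    (hτ : DifferentiableAt 𝕜 τ x) (hu : DifferentiableAt 𝕜 u x) (hw : DifferentiableAt 𝕜 w x)
    (v : E) :
    fderiv 𝕜 (fun y => a + F (τ y) * u y * w y) x v =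
      F' * fderiv 𝕜 τ x v * u x * w x +
        F (τ x) * (fderiv 𝕜 u x v * w x + u x * fderiv 𝕜 w x v) := by
  have hderiv : HasFDerivAt (fun y => a + F (τ y) * u y * w y) _ x :=
    (((hF.comp_hasFDerivAt x hτ.hasFDerivAt).mul hu.hasFDerivAt).mul hw.hasFDerivAt).const_add a
  rw [hderiv.fderiv]
  simp only [FunLike.coe_add, FunLike.coe_smul, Pi.add_apply, Pi.smul_apply, smul_eq_mul,
    Pi.mul_apply, Function.comp_apply]
  ring

end

section
variable {ι : Type*} [Fintype ι] [DecidableEq ι]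

theorem fderiv_half_vecMul_dotProduct_self_single {M : Matrix ι ι ℝ} (hM : M.IsSymm)
    (p : ι → ℝ) (k : ι) :
    fderiv ℝ (fun q : ι → ℝ => 1 / 2 * ((q ᵥ* M) ⬝ᵥ q)) p (Pi.single k 1) = (p ᵥ* M) k := by
  have hrow : M.row k ⬝ᵥ p = (p ᵥ* M) k := by
    simp only [row, dotProduct, vecMul]
    exact Finset.sum_congr rfl fun i _ => by rw [hM.apply i k, mul_comm]
  rw [fderiv_const_mul (hasFDerivAt_vecMul_dotProduct_self M p).differentiableAt,
    FunLike.coe_smul, Pi.smul_apply, fderiv_vecMul_dotProduct_self, single_one_vecMul,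
    dotProduct_single_one, hrow, smul_eq_mul]
  ring

theorem hasDerivAt_div_mul_sq_sub {A c x : ℝ} (hA : A ≠ 0) (hx : A ^ 2 - 2 * c * x ≠ 0) :
    HasDerivAt (fun y => c / (A * (A ^ 2 - 2 * c * y)))
      (2 * c ^ 2 / (A * (A ^ 2 - 2 * c * x) ^ 2)) x := by
  have hd : HasDerivAt (fun y => A * (A ^ 2 - 2 * c * y)) (A * -(2 * c)) x := by
    simpa using (((hasDerivAt_id x).const_mul (2 * c)).const_sub (A ^ 2)).const_mul A
  refine ((hasDerivAt_const x c).fun_div hd (mul_ne_zero hA hx)).congr_deriv ?_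
  field_simp
  ring

theorem fderiv_inverseMetric_apply_single {M : Matrix ι ι ℝ} (hM : M.IsSymm) {A c : ℝ}
    (hA : A ≠ 0) {u : (ι → ℝ) → ι → ℝ} (hu : u = fun q => q ᵥ* M) {τ : (ι → ℝ) → ℝ}
    (hτ : τ = fun q => 1 / 2 * ((q ᵥ* M) ⬝ᵥ q)) {p : ι → ℝ} (hp : A ^ 2 - 2 * c * τ p ≠ 0)
    (i j k : ι) :
    fderiv ℝ (fun q => 1 / A * M i j + c / (A * (A ^ 2 - 2 * c * τ q)) * u q i * u q j) p
        (Pi.single k 1) =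
      c / (A * (A ^ 2 - 2 * c * τ p)) * (M k i * u p j + M k j * u p i) +
        2 * c ^ 2 / (A * (A ^ 2 - 2 * c * τ p) ^ 2) * u p k * u p i * u p j := by
  rw [fderiv_const_add_comp_mul_mul _ (hasDerivAt_div_mul_sq_sub hA hp)
    (hτ ▸ (hasFDerivAt_vecMul_dotProduct_self M p).differentiableAt.const_mul _)
    (hu ▸ (hasFDerivAt_vecMul_apply M i p).differentiableAt)
    (hu ▸ (hasFDerivAt_vecMul_apply M j p).differentiableAt)]
  subst hu hτ
  rw [fderiv_half_vecMul_dotProduct_self_single hM, fderiv_vecMul_apply, fderiv_vecMul_apply,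
    single_one_vecMul]
  simp only [row]
  ring

theorem sum_metric_mul_vecMul_nonsing_inv {g : Matrix ι ι ℝ} (hg : IsUnit g.det)
    (hsymm : g⁻¹.IsSymm) {A : ℝ} (hA : A ≠ 0) (c : ℝ) (p : ι → ℝ) (h : ι) :
    ∑ k, (A * g h k - c / A * p h * p k) * (p ᵥ* g⁻¹) k =
      (A ^ 2 - 2 * c * (1 / 2 * ((p ᵥ* g⁻¹) ⬝ᵥ p))) / A * p h := by
  have hg' : ∑ k, g h k * (p ᵥ* g⁻¹) k = p h :=
    congrFun (mulVec_vecMul_nonsing_inv hg hsymm p) h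
  have hp : ∑ k, p k * (p ᵥ* g⁻¹) k = (p ᵥ* g⁻¹) ⬝ᵥ p := dotProduct_comm _ _
  simp only [sub_mul, Finset.sum_sub_distrib, mul_assoc, ← Finset.mul_sum, hg', hp]
  field_simp

end

/-- the partial derivatives of `Hⁱʲ(p)` in `pₖ` are given by the
stated formula, and the Christoffel-type combination `Qⁱʲₕ` equals
`(c/A) Hⁱʲ pₕ`. -/
theorem stmt11 {n : ℕ} (g : Matrix (Fin n) (Fin n) ℝ) (hg : g.PosDef)
    (A c : ℝ) (hA : A > 0)
    (g0 : (Fin n → ℝ) → Fin n → ℝ)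
    (hg0 : ∀ q i, g0 q i = ∑ h, q h * g⁻¹ h i)
    (t : (Fin n → ℝ) → ℝ)
    (ht : ∀ q, t q = (1 / 2) * ∑ i, ∑ k, g⁻¹ i k * q i * q k)
    (Hfun : (Fin n → ℝ) → Fin n → Fin n → ℝ)
    (hHfun : ∀ q i j, Hfun q i j = (1 / A) * g⁻¹ i j +
      (c / (A * (A ^ 2 - 2 * c * t q))) * g0 q i * g0 q j)
    (p : Fin n → ℝ) (hp : A ^ 2 - 2 * c * t p > 0)
    (dH : Fin n → Fin n → Fin n → ℝ)
    (hdH : ∀ k i j, dH k i j =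
      fderiv ℝ (fun q => Hfun q i j) p (Pi.single k 1))
    (Q : Fin n → Fin n → Fin n → ℝ)
    (hQ : ∀ i j h, Q i j h = (1 / 2) * ∑ k,
      (A * g h k - (c / A) * p h * p k) * (dH i j k + dH j i k - dH k i j)) :
    (∀ k i j, dH k i j =
        (c / (A * (A ^ 2 - 2 * c * t p))) *
          (g⁻¹ k i * g0 p j + g⁻¹ k j * g0 p i) +
        (2 * c ^ 2 / (A * (A ^ 2 - 2 * c * t p) ^ 2)) *
          g0 p k * g0 p i * g0 p j) ∧
    (∀ i j h, Q i j h = (c / A) * Hfun p i j * p h) := by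
  have hM : g⁻¹.IsSymm := (isHermitian_iff_isSymm.1 hg.isHermitian).inv
  have hg0' : g0 = fun q => q ᵥ* g⁻¹ := funext fun q => funext (hg0 q)
  have ht' : t = fun q => 1 / 2 * ((q ᵥ* g⁻¹) ⬝ᵥ q) :=
    funext fun q => by rw [ht, sum_sum_mul_mul_eq_vecMul_dotProduct]
  have hdH' : ∀ k i j, dH k i j =
      c / (A * (A ^ 2 - 2 * c * t p)) * (g⁻¹ k i * g0 p j + g⁻¹ k j * g0 p i) +
        2 * c ^ 2 / (A * (A ^ 2 - 2 * c * t p) ^ 2) * g0 p k * g0 p i * g0 p j := by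
    intro k i j
    rw [hdH, funext (hHfun · i j)]
    exact fderiv_inverseMetric_apply_single hM hA.ne' hg0' ht' hp.ne' i j k
  refine ⟨hdH', fun i j h => ?_⟩
  have hcomb : ∀ k, dH i j k + dH j i k - dH k i j =
      (2 * (c / (A * (A ^ 2 - 2 * c * t p))) * g⁻¹ i j +
        2 * c ^ 2 / (A * (A ^ 2 - 2 * c * t p) ^ 2) * g0 p i * g0 p j) * g0 p k := fun k => by
    rw [hdH', hdH', hdH', hM.apply i k, hM.apply j k, hM.apply j i]
    ring
  have hG : ∑ k, (A * g h k - c / A * p h * p k) * g0 p k = (A ^ 2 - 2 * c * t p) / A * p h := by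
    simpa only [hg0', ht'] using
      sum_metric_mul_vecMul_nonsing_inv hg.det_pos.ne'.isUnit hM hA.ne' c p h
  rw [hQ, Finset.sum_congr rfl fun k _ => by rw [hcomb k, mul_left_comm], ← Finset.mul_sum, hG,
    hHfun]
  field_simp
end

section
/- Let K be the algebraic curvature operator on W = ℝⁿ × ℝⁿ defined blockwise (as in equation (17) of the paper) by K(δᵢ,δⱼ)δₖ = (c/A)(δʰᵢGⱼₖ - δʰⱼGᵢₖ)δₕ, K(∂ᵢ,∂ʲ)∂ᵏ = (c/A)(δⁱₕHʲᵏ - δʲₕHⁱᵏ)∂ₕ, K(∂ⁱ,δⱼ)δₖ = (c/A)δⁱⱼGₕₖ∂ₕ, K(∂ⁱ,δⱼ)∂ᵏ = -(c/A)δⁱⱼHʰᵏδₕ, etc. Then the Ricci tensor Ric(Y,Z) = trace(X ↦ K(X,Y)Z) satisfies Ric = (cn/A)·G, where G is the block-diagonal metric with blocks (Gᵢⱼ) and (Hⁱʲ). -/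
/-!
Split `W = ℝⁿ × ℝⁿ` and compute `Ric(Y, Z)` as the partial trace of `X ↦ K(X, Y)Z` over the
`δ`-factor plus the one over the `∂`-factor, for basis vectors `Y`, `Z`. In the mixed blocks
`(δ, ∂)` and `(∂, δ)` every contribution is zero because `K(X, Y)Z` lies in the other factor.
In the block `(δⱼ, δₖ)` the `δ`-trace of `X ↦ K(X, δⱼ)δₖ` is `(n - 1)(c/A)Gⱼₖ` and the `∂`-trace
adds `(c/A)Gⱼₖ`; the block `(∂ʲ, ∂ᵏ)` works the same way with `H`, using the antisymmetry of `K`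
to rewrite `K(δᵢ, ∂ʲ)` as `-K(∂ʲ, δᵢ)`. Both sides being bilinear, they agree.
-/

open Matrix

namespace LinearMap

variable {R ι : Type*} [CommRing R] [Fintype ι] [DecidableEq ι]

theorem trace_prod_pi_eq_sum (T : Module.End R ((ι → R) × (ι → R))) :
    trace R _ T = ∑ i, (T (Pi.single i 1, 0)).1 i + ∑ i, (T (0, Pi.single i 1)).2 i := by
  rw [trace_eq_matrix_trace R ((Pi.basisFun R ι).prod (Pi.basisFun R ι)), Matrix.trace,
    Fintype.sum_sum_type]
  simp [toMatrix_apply]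

end LinearMap

section Ricci

variable {R M : Type*} [CommRing R] [AddCommGroup M] [Module R M]

noncomputable def ricci (K : M →ₗ[R] M →ₗ[R] M →ₗ[R] M) : M →ₗ[R] M →ₗ[R] R :=
  (LinearMap.lflip.comp K.flip).compr₂ (LinearMap.trace R M)

theorem ricci_apply (K : M →ₗ[R] M →ₗ[R] M →ₗ[R] M) (Y Z : M) :
    ricci K Y Z = LinearMap.trace R M ((K.flip Y).flip Z) :=
  rfl

end Ricci

section BlockCurvature

variable {R ι : Type*} [CommRing R] [DecidableEq ι]

def fstSingle (i : ι) : (ι → R) × (ι → R) := (Pi.single i 1, 0)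

def sndSingle (i : ι) : (ι → R) × (ι → R) := (0, Pi.single i 1)

@[simp] theorem fstSingle_fst (i : ι) : (fstSingle i : (ι → R) × (ι → R)).1 = Pi.single i 1 := rfl

@[simp] theorem fstSingle_snd (i : ι) : (fstSingle i : (ι → R) × (ι → R)).2 = 0 := rfl

@[simp] theorem sndSingle_fst (i : ι) : (sndSingle i : (ι → R) × (ι → R)).1 = 0 := rfl

@[simp] theorem sndSingle_snd (i : ι) : (sndSingle i : (ι → R) × (ι → R)).2 = Pi.single i 1 := rfl

variable [Fintype ι]

theorem prod_basisFun_inl (i : ι) :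
    ((Pi.basisFun R ι).prod (Pi.basisFun R ι)) (Sum.inl i) = fstSingle i := by
  simp [Module.Basis.prod_apply]
  rfl

theorem prod_basisFun_inr (i : ι) :
    ((Pi.basisFun R ι).prod (Pi.basisFun R ι)) (Sum.inr i) = sndSingle i := by
  simp [Module.Basis.prod_apply]
  rfl

noncomputable def blockMetric (G H : Matrix ι ι R) :
    (ι → R) × (ι → R) →ₗ[R] (ι → R) × (ι → R) →ₗ[R] R :=
  (toLinearMap₂' R G).compl₁₂ (LinearMap.fst R _ _) (LinearMap.fst R _ _) +
    (toLinearMap₂' R H).compl₁₂ (LinearMap.snd R _ _) (LinearMap.snd R _ _)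

theorem blockMetric_apply (G H : Matrix ι ι R) (u v : (ι → R) × (ι → R)) :
    blockMetric G H u v = u.1 ⬝ᵥ G *ᵥ v.1 + u.2 ⬝ᵥ H *ᵥ v.2 := by
  simp [blockMetric, toLinearMap₂'_apply']

variable (K : (ι → R) × (ι → R) →ₗ[R] (ι → R) × (ι → R) →ₗ[R]
  (ι → R) × (ι → R) →ₗ[R] (ι → R) × (ι → R)) (G H : Matrix ι ι R) (κ : R)

theorem ricci_eq_sum (Y Z : (ι → R) × (ι → R)) :
    ricci K Y Z = ∑ i, (K (fstSingle i) Y Z).1 i + ∑ i, (K (sndSingle i) Y Z).2 i :=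
  LinearMap.trace_prod_pi_eq_sum _

theorem ricci_fstSingle_fstSingle
    (hK1 : ∀ i j k, K (fstSingle i) (fstSingle j) (fstSingle k) =
      κ • (G j k • fstSingle i - G i k • fstSingle j))
    (hK5 : ∀ i j k, K (sndSingle i) (fstSingle j) (fstSingle k) =
      κ • ((if i = j then (1 : R) else 0) • ∑ h, G h k • sndSingle h)) (j k : ι) :
    ricci K (fstSingle j) (fstSingle k) = κ * Fintype.card ι * G j k := by
  simp [ricci_eq_sum, hK1, hK5, Pi.single_apply, Prod.snd_sum, Finset.sum_apply,
    apply_ite Prod.snd, ite_apply, Finset.sum_sub_distrib, mul_sub]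
  ring

theorem ricci_fstSingle_sndSingle
    (hK2 : ∀ i j k, K (fstSingle i) (fstSingle j) (sndSingle k) =
      κ • ((if k = j then (1 : R) else 0) • ∑ h, G h i • sndSingle h -
        (if k = i then (1 : R) else 0) • ∑ h, G h j • sndSingle h))
    (hK6 : ∀ i j k, K (sndSingle i) (fstSingle j) (sndSingle k) =
      -(κ • ((if i = j then (1 : R) else 0) • ∑ h, H h k • fstSingle h))) (j k : ι) :
    ricci K (fstSingle j) (sndSingle k) = 0 := by
  simp [ricci_eq_sum, hK2, hK6, apply_ite Prod.fst, apply_ite Prod.snd, Prod.fst_sum,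
    Prod.snd_sum]

theorem ricci_sndSingle_fstSingle (hKalt : ∀ X Y, K X Y = -K Y X)
    (hK3 : ∀ i j k, K (sndSingle i) (sndSingle j) (fstSingle k) =
      κ • ((if j = k then (1 : R) else 0) • ∑ h, H h i • fstSingle h -
        (if i = k then (1 : R) else 0) • ∑ h, H h j • fstSingle h))
    (hK5 : ∀ i j k, K (sndSingle i) (fstSingle j) (fstSingle k) =
      κ • ((if i = j then (1 : R) else 0) • ∑ h, G h k • sndSingle h)) (j k : ι) :
    ricci K (sndSingle j) (fstSingle k) = 0 := by
  simp [ricci_eq_sum, hKalt (fstSingle _) (sndSingle j), hK3, hK5, apply_ite Prod.fst,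
    apply_ite Prod.snd, Prod.fst_sum, Prod.snd_sum]

theorem ricci_sndSingle_sndSingle (hKalt : ∀ X Y, K X Y = -K Y X)
    (hK4 : ∀ i j k, K (sndSingle i) (sndSingle j) (sndSingle k) =
      κ • (H j k • sndSingle i - H i k • sndSingle j))
    (hK6 : ∀ i j k, K (sndSingle i) (fstSingle j) (sndSingle k) =
      -(κ • ((if i = j then (1 : R) else 0) • ∑ h, H h k • fstSingle h))) (j k : ι) :
    ricci K (sndSingle j) (sndSingle k) = κ * Fintype.card ι * H j k := by
  simp [ricci_eq_sum, hKalt (fstSingle _) (sndSingle j), hK4, hK6, Pi.single_apply, Prod.fst_sum,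
    Finset.sum_apply, apply_ite Prod.fst, ite_apply, Finset.sum_sub_distrib, mul_sub]
  ring

theorem ricci_eq_smul_blockMetric
    (hK1 : ∀ i j k, K (fstSingle i) (fstSingle j) (fstSingle k) =
      κ • (G j k • fstSingle i - G i k • fstSingle j))
    (hK2 : ∀ i j k, K (fstSingle i) (fstSingle j) (sndSingle k) =
      κ • ((if k = j then (1 : R) else 0) • ∑ h, G h i • sndSingle h -
        (if k = i then (1 : R) else 0) • ∑ h, G h j • sndSingle h))
    (hK3 : ∀ i j k, K (sndSingle i) (sndSingle j) (fstSingle k) =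
      κ • ((if j = k then (1 : R) else 0) • ∑ h, H h i • fstSingle h -
        (if i = k then (1 : R) else 0) • ∑ h, H h j • fstSingle h))
    (hK4 : ∀ i j k, K (sndSingle i) (sndSingle j) (sndSingle k) =
      κ • (H j k • sndSingle i - H i k • sndSingle j))
    (hK5 : ∀ i j k, K (sndSingle i) (fstSingle j) (fstSingle k) =
      κ • ((if i = j then (1 : R) else 0) • ∑ h, G h k • sndSingle h))
    (hK6 : ∀ i j k, K (sndSingle i) (fstSingle j) (sndSingle k) =
      -(κ • ((if i = j then (1 : R) else 0) • ∑ h, H h k • fstSingle h)))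
    (hKalt : ∀ X Y, K X Y = -K Y X) :
    ricci K = (κ * Fintype.card ι) • blockMetric G H := by
  let b := (Pi.basisFun R ι).prod (Pi.basisFun R ι)
  refine LinearMap.ext_basis b b fun s t => ?_
  rcases s with j | j <;> rcases t with k | k <;>
    simp only [b, prod_basisFun_inl, prod_basisFun_inr, LinearMap.smul_apply, smul_eq_mul,
      blockMetric_apply]
  · simp [ricci_fstSingle_fstSingle K G κ hK1 hK5, mul_assoc]
  · simp [ricci_fstSingle_sndSingle K G H κ hK2 hK6]
  · simp [ricci_sndSingle_fstSingle K G H κ hKalt hK3 hK5]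
  · simp [ricci_sndSingle_sndSingle K H κ hKalt hK4 hK6, mul_assoc]

end BlockCurvature

theorem stmt12_general {n : ℕ} (Gm : Matrix (Fin n) (Fin n) ℝ)
    (Hm : Matrix (Fin n) (Fin n) ℝ)
    (c A : ℝ)
    (del par : Fin n → (Fin n → ℝ) × (Fin n → ℝ))
    (hdel : ∀ i, del i = (Pi.single i 1, 0))
    (hpar : ∀ i, par i = (0, Pi.single i 1))
    (K : ((Fin n → ℝ) × (Fin n → ℝ)) →ₗ[ℝ] ((Fin n → ℝ) × (Fin n → ℝ)) →ₗ[ℝ]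
      ((Fin n → ℝ) × (Fin n → ℝ)) →ₗ[ℝ] ((Fin n → ℝ) × (Fin n → ℝ)))
    (hK1 : ∀ i j k, K (del i) (del j) (del k) =
      (c / A) • (Gm j k • del i - Gm i k • del j))
    (hK2 : ∀ i j k, K (del i) (del j) (par k) =
      (c / A) • ((if k = j then (1 : ℝ) else 0) • ∑ h, Gm h i • par h -
        (if k = i then (1 : ℝ) else 0) • ∑ h, Gm h j • par h))
    (hK3 : ∀ i j k, K (par i) (par j) (del k) =
      (c / A) • ((if j = k then (1 : ℝ) else 0) • ∑ h, Hm h i • del h -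
        (if i = k then (1 : ℝ) else 0) • ∑ h, Hm h j • del h))
    (hK4 : ∀ i j k, K (par i) (par j) (par k) =
      (c / A) • (Hm j k • par i - Hm i k • par j))
    (hK5 : ∀ i j k, K (par i) (del j) (del k) =
      (c / A) • ((if i = j then (1 : ℝ) else 0) • ∑ h, Gm h k • par h))
    (hK6 : ∀ i j k, K (par i) (del j) (par k) =
      -((c / A) • ((if i = j then (1 : ℝ) else 0) • ∑ h, Hm h k • del h)))
    (hKalt : ∀ X Y, K X Y = -K Y X)
    (Ric : ((Fin n → ℝ) × (Fin n → ℝ)) → ((Fin n → ℝ) × (Fin n → ℝ)) → ℝ)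
    (hRic : ∀ Y Z, Ric Y Z =
      LinearMap.trace ℝ _ ((K.flip Y).flip Z))
    (Gmet : ((Fin n → ℝ) × (Fin n → ℝ)) → ((Fin n → ℝ) × (Fin n → ℝ)) → ℝ)
    (hGmet : ∀ u u', Gmet u u' =
      u.1 ⬝ᵥ Gm.mulVec u'.1 + u.2 ⬝ᵥ Hm.mulVec u'.2) :
    ∀ Y Z, Ric Y Z = (c * n / A) * Gmet Y Z := by
  obtain rfl : del = fstSingle := funext hdel
  obtain rfl : par = sndSingle := funext hpar
  have hRicci := ricci_eq_smul_blockMetric K Gm Hm (c / A) hK1 hK2 hK3 hK4 hK5 hK6 hKalt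
  intro Y Z
  rw [hRic, hGmet, ← ricci_apply, hRicci, LinearMap.smul_apply, LinearMap.smul_apply,
    blockMetric_apply, Fintype.card_fin, smul_eq_mul]
  ring

/-- for the algebraic curvature operator `K` of equation (17),
the Ricci tensor `Ric(Y,Z) = trace (X ↦ K(X,Y)Z)` equals `(cn/A)·G`. -/
theorem stmt12 {n : ℕ} (Gm : Matrix (Fin n) (Fin n) ℝ) (hGm : Gm.PosDef)
    (Hm : Matrix (Fin n) (Fin n) ℝ) (hHm : Hm = Gm⁻¹)
    (c A : ℝ) (hA : A > 0)
    (del par : Fin n → (Fin n → ℝ) × (Fin n → ℝ))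
    (hdel : ∀ i, del i = (Pi.single i 1, 0))
    (hpar : ∀ i, par i = (0, Pi.single i 1))
    (K : ((Fin n → ℝ) × (Fin n → ℝ)) →ₗ[ℝ] ((Fin n → ℝ) × (Fin n → ℝ)) →ₗ[ℝ]
      ((Fin n → ℝ) × (Fin n → ℝ)) →ₗ[ℝ] ((Fin n → ℝ) × (Fin n → ℝ)))
    (hK1 : ∀ i j k, K (del i) (del j) (del k) =
      (c / A) • (Gm j k • del i - Gm i k • del j))
    (hK2 : ∀ i j k, K (del i) (del j) (par k) =
      (c / A) • ((if k = j then (1 : ℝ) else 0) • ∑ h, Gm h i • par h -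
        (if k = i then (1 : ℝ) else 0) • ∑ h, Gm h j • par h))
    (hK3 : ∀ i j k, K (par i) (par j) (del k) =
      (c / A) • ((if j = k then (1 : ℝ) else 0) • ∑ h, Hm h i • del h -
        (if i = k then (1 : ℝ) else 0) • ∑ h, Hm h j • del h))
    (hK4 : ∀ i j k, K (par i) (par j) (par k) =
      (c / A) • (Hm j k • par i - Hm i k • par j))
    (hK5 : ∀ i j k, K (par i) (del j) (del k) =
      (c / A) • ((if i = j then (1 : ℝ) else 0) • ∑ h, Gm h k • par h))
    (hK6 : ∀ i j k, K (par i) (del j) (par k) =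
      -((c / A) • ((if i = j then (1 : ℝ) else 0) • ∑ h, Hm h k • del h)))
    (hKalt : ∀ X Y, K X Y = -K Y X)
    (Ric : ((Fin n → ℝ) × (Fin n → ℝ)) → ((Fin n → ℝ) × (Fin n → ℝ)) → ℝ)
    (hRic : ∀ Y Z, Ric Y Z =
      LinearMap.trace ℝ _ ((K.flip Y).flip Z))
    (Gmet : ((Fin n → ℝ) × (Fin n → ℝ)) → ((Fin n → ℝ) × (Fin n → ℝ)) → ℝ)
    (hGmet : ∀ u u', Gmet u u' =
      u.1 ⬝ᵥ Gm.mulVec u'.1 + u.2 ⬝ᵥ Hm.mulVec u'.2) :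
    ∀ Y Z, Ric Y Z = (c * n / A) * Gmet Y Z :=
  stmt12_general Gm Hm c A del par hdel hpar K hK1 hK2 hK3 hK4 hK5 hK6 hKalt Ric hRic Gmet hGmet
end

section
/- With K defined blockwise as in (17), K satisfies the first Bianchi identity: K(X,Y)Z + K(Y,Z)X + K(Z,X)Y = 0 for all X, Y, Z in the span of the adapted frame. -/
open Matrix

/-!
The cyclic sum `K x y z + K y z x + K z x y` is trilinear and invariant under rotating its
arguments, so it suffices to check that it vanishes on the eight kinds of triples of frame
vectors, and up to rotation only four remain: `δδδ` and `∂∂∂`, where `K` has the shape of a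
constant curvature tensor for the symmetric matrices `G` and `H = G⁻¹`, and `δδ∂` and `∂∂δ`,
which are interchanged by swapping `δ ↔ ∂` and `G ↔ H` once antisymmetry of `K` is used.
-/

section CyclicSum

variable {R V W : Type*} [CommRing R] [AddCommGroup V] [Module R V] [AddCommGroup W] [Module R W]

-- `lflip ∘ₗ M.flip` is the trilinear map `x y z ↦ M z x y`.
def cyclicSum (K : V →ₗ[R] V →ₗ[R] V →ₗ[R] W) : V →ₗ[R] V →ₗ[R] V →ₗ[R] W :=
  K + LinearMap.lflip.toLinearMap ∘ₗ (LinearMap.lflip.toLinearMap ∘ₗ K.flip).flip +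
    LinearMap.lflip.toLinearMap ∘ₗ K.flip

@[simp]
theorem cyclicSum_apply (K : V →ₗ[R] V →ₗ[R] V →ₗ[R] W) (x y z : V) :
    cyclicSum K x y z = K x y z + K y z x + K z x y :=
  rfl

theorem cyclicSum_rotate (K : V →ₗ[R] V →ₗ[R] V →ₗ[R] W) (x y z : V) :
    cyclicSum K x y z = cyclicSum K y z x := by
  simp only [cyclicSum_apply]
  abel

theorem LinearMap.ext_basis₃ {ι : Type*} (b : Module.Basis ι R V)
    {T T' : V →ₗ[R] V →ₗ[R] V →ₗ[R] W} (h : ∀ i j k, T (b i) (b j) (b k) = T' (b i) (b j) (b k)) :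
    T = T' :=
  LinearMap.ext_basis b b fun i j => b.ext fun k => h i j k

theorem cyclicSum_eq_zero_of_basis_sum {ι κ : Type*} (b : Module.Basis (ι ⊕ κ) R V)
    (K : V →ₗ[R] V →ₗ[R] V →ₗ[R] W)
    (hlll : ∀ i j k, cyclicSum K (b (.inl i)) (b (.inl j)) (b (.inl k)) = 0)
    (hllr : ∀ i j k, cyclicSum K (b (.inl i)) (b (.inl j)) (b (.inr k)) = 0)
    (hrrl : ∀ i j k, cyclicSum K (b (.inr i)) (b (.inr j)) (b (.inl k)) = 0)
    (hrrr : ∀ i j k, cyclicSum K (b (.inr i)) (b (.inr j)) (b (.inr k)) = 0) :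
    cyclicSum K = 0 := by
  refine LinearMap.ext_basis₃ b ?_
  rintro (i | i) (j | j) (k | k) <;> simp only [LinearMap.zero_apply]
  · exact hlll i j k
  · exact hllr i j k
  · rw [← cyclicSum_rotate]; exact hllr k i j
  · rw [cyclicSum_rotate]; exact hrrl j k i
  · rw [cyclicSum_rotate]; exact hllr j k i
  · rw [← cyclicSum_rotate]; exact hrrl k i j
  · exact hrrl i j k
  · exact hrrr i j k

end CyclicSum

section FrameComputations

variable {ι R V : Type*} [CommRing R] [AddCommGroup V] [Module R V]
  (K : V →ₗ[R] V →ₗ[R] V →ₗ[R] V) (s : R)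

theorem cyclicSum_eq_zero_of_constCurvature {G : Matrix ι ι R} (hG : G.IsSymm) (e : ι → V)
    (hK : ∀ i j k, K (e i) (e j) (e k) = s • (G j k • e i - G i k • e j)) (i j k : ι) :
    cyclicSum K (e i) (e j) (e k) = 0 := by
  rw [cyclicSum_apply, hK, hK, hK, hG.apply i k, hG.apply j k, hG.apply i j]
  module

theorem cyclicSum_eq_zero_of_mixed [Fintype ι] [DecidableEq ι] (G : Matrix ι ι R) (e f : ι → V)
    (hKalt : ∀ x y, K x y = -K y x)
    (hee : ∀ i j k, K (e i) (e j) (f k) = s • ((if k = j then (1 : R) else 0) • ∑ h, G h i • f h -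
      (if k = i then (1 : R) else 0) • ∑ h, G h j • f h))
    (hfe : ∀ i j k, K (f i) (e j) (e k) = s • ((if i = j then (1 : R) else 0) • ∑ h, G h k • f h))
    (i j k : ι) :
    cyclicSum K (e i) (e j) (f k) = 0 := by
  rw [cyclicSum_apply, hKalt (e j), LinearMap.neg_apply, hee, hfe, hfe]
  module

end FrameComputations

theorem stmt13_general {n : ℕ} (Gm : Matrix (Fin n) (Fin n) ℝ) (hGm : Gm.PosDef)
    (Hm : Matrix (Fin n) (Fin n) ℝ) (hHm : Hm = Gm⁻¹)
    (c A : ℝ)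
    (del par : Fin n → (Fin n → ℝ) × (Fin n → ℝ))
    (hdel : ∀ i, del i = (Pi.single i 1, 0))
    (hpar : ∀ i, par i = (0, Pi.single i 1))
    (K : ((Fin n → ℝ) × (Fin n → ℝ)) →ₗ[ℝ] ((Fin n → ℝ) × (Fin n → ℝ)) →ₗ[ℝ]
      ((Fin n → ℝ) × (Fin n → ℝ)) →ₗ[ℝ] ((Fin n → ℝ) × (Fin n → ℝ)))
    (hK1 : ∀ i j k, K (del i) (del j) (del k) =
      (c / A) • (Gm j k • del i - Gm i k • del j))
    (hK2 : ∀ i j k, K (del i) (del j) (par k) =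
      (c / A) • ((if k = j then (1 : ℝ) else 0) • ∑ h, Gm h i • par h -
        (if k = i then (1 : ℝ) else 0) • ∑ h, Gm h j • par h))
    (hK3 : ∀ i j k, K (par i) (par j) (del k) =
      (c / A) • ((if j = k then (1 : ℝ) else 0) • ∑ h, Hm h i • del h -
        (if i = k then (1 : ℝ) else 0) • ∑ h, Hm h j • del h))
    (hK4 : ∀ i j k, K (par i) (par j) (par k) =
      (c / A) • (Hm j k • par i - Hm i k • par j))
    (hK5 : ∀ i j k, K (par i) (del j) (del k) =
      (c / A) • ((if i = j then (1 : ℝ) else 0) • ∑ h, Gm h k • par h))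
    (hK6 : ∀ i j k, K (par i) (del j) (par k) =
      -((c / A) • ((if i = j then (1 : ℝ) else 0) • ∑ h, Hm h k • del h)))
    (hKalt : ∀ X Y, K X Y = -K Y X) :
    ∀ X Y Z, K X Y Z + K Y Z X + K Z X Y = 0 := by
  have hG : Gm.IsSymm := isHermitian_iff_isSymm.mp hGm.isHermitian
  have hH : Hm.IsSymm := hHm ▸ hG.inv
  have hK3' : ∀ i j k, K (par i) (par j) (del k) =
      (c / A) • ((if k = j then (1 : ℝ) else 0) • ∑ h, Hm h i • del h -
        (if k = i then (1 : ℝ) else 0) • ∑ h, Hm h j • del h) := by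
    intro i j k
    simp only [hK3, @eq_comm _ j k, @eq_comm _ i k]
  have hK6' : ∀ i j k, K (del i) (par j) (par k) =
      (c / A) • ((if i = j then (1 : ℝ) else 0) • ∑ h, Hm h k • del h) := by
    intro i j k
    simp only [hKalt (del i), LinearMap.neg_apply, hK6, neg_neg, @eq_comm _ j i]
  let b := (Pi.basisFun ℝ (Fin n)).prod (Pi.basisFun ℝ (Fin n))
  have hb_inl : ∀ i, b (.inl i) = del i := fun i => by ext1 <;> simp [b, hdel]
  have hb_inr : ∀ i, b (.inr i) = par i := fun i => by ext1 <;> simp [b, hpar]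
  have hcyc : cyclicSum K = 0 := by
    refine cyclicSum_eq_zero_of_basis_sum b K ?_ ?_ ?_ ?_ <;>
      simp only [hb_inl, hb_inr]
    · exact cyclicSum_eq_zero_of_constCurvature K _ hG del hK1
    · exact cyclicSum_eq_zero_of_mixed K _ Gm del par hKalt hK2 hK5
    · exact cyclicSum_eq_zero_of_mixed K _ Hm par del hKalt hK3' hK6'
    · exact cyclicSum_eq_zero_of_constCurvature K _ hH par hK4
  intro X Y Z
  rw [← cyclicSum_apply, hcyc]
  rfl

/-- for the algebraic curvature operator `K` of equation (17),
`K` satisfies the first Bianchi identity. -/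
theorem stmt13 {n : ℕ} (Gm : Matrix (Fin n) (Fin n) ℝ) (hGm : Gm.PosDef)
    (Hm : Matrix (Fin n) (Fin n) ℝ) (hHm : Hm = Gm⁻¹)
    (c A : ℝ) (hA : A > 0)
    (del par : Fin n → (Fin n → ℝ) × (Fin n → ℝ))
    (hdel : ∀ i, del i = (Pi.single i 1, 0))
    (hpar : ∀ i, par i = (0, Pi.single i 1))
    (K : ((Fin n → ℝ) × (Fin n → ℝ)) →ₗ[ℝ] ((Fin n → ℝ) × (Fin n → ℝ)) →ₗ[ℝ]
      ((Fin n → ℝ) × (Fin n → ℝ)) →ₗ[ℝ] ((Fin n → ℝ) × (Fin n → ℝ)))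
    (hK1 : ∀ i j k, K (del i) (del j) (del k) =
      (c / A) • (Gm j k • del i - Gm i k • del j))
    (hK2 : ∀ i j k, K (del i) (del j) (par k) =
      (c / A) • ((if k = j then (1 : ℝ) else 0) • ∑ h, Gm h i • par h -
        (if k = i then (1 : ℝ) else 0) • ∑ h, Gm h j • par h))
    (hK3 : ∀ i j k, K (par i) (par j) (del k) =
      (c / A) • ((if j = k then (1 : ℝ) else 0) • ∑ h, Hm h i • del h -
        (if i = k then (1 : ℝ) else 0) • ∑ h, Hm h j • del h))
    (hK4 : ∀ i j k, K (par i) (par j) (par k) =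
      (c / A) • (Hm j k • par i - Hm i k • par j))
    (hK5 : ∀ i j k, K (par i) (del j) (del k) =
      (c / A) • ((if i = j then (1 : ℝ) else 0) • ∑ h, Gm h k • par h))
    (hK6 : ∀ i j k, K (par i) (del j) (par k) =
      -((c / A) • ((if i = j then (1 : ℝ) else 0) • ∑ h, Hm h k • del h)))
    (hKalt : ∀ X Y, K X Y = -K Y X) :
    ∀ X Y Z, K X Y Z + K Y Z X + K Z X Y = 0 :=
  stmt13_general Gm hGm Hm hHm c A del par hdel hpar K hK1 hK2 hK3 hK4 hK5 hK6 hKalt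
end
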